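/- For all real numbers a, b, c one has det(a·𝐄₁ + b·𝐄₂ + c·𝐄₃) = (9/16)·(a² + b² + c²)². Consequently, if (a,b,c) ≠ (0,0,0) then the complex 4×4 matrix a·𝐄₁ + b·𝐄₂ + c·𝐄₃ is invertible, so the only vector Ψ ∈ ℂ⁴ with (a·𝐄₁ + b·𝐄₂ + c·𝐄₃)Ψ = 0 is Ψ = 0. -/

import Mathlib

noncomputable section

open Matrix Complex

/-- The spin representation image 𝐄₁ of E₁. -/
def BE1 : Matrix (Fin 4) (Fin 4) ℂ :=
  (1/2 : ℂ) •
    !![0, Complex.I, -(Real.sqrt 3 : ℂ), Complex.I;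
       Complex.I, 0, -Complex.I, -(Real.sqrt 3 : ℂ);
       (Real.sqrt 3 : ℂ), -Complex.I, 0, -Complex.I;
       Complex.I, (Real.sqrt 3 : ℂ), -Complex.I, 0]

/-- The spin representation image 𝐄₂ of E₂. -/
def BE2 : Matrix (Fin 4) (Fin 4) ℂ :=
  (1/2 : ℂ) •
    !![Complex.I * (Real.sqrt 3 : ℂ), -1, 0, -1;
       1, Complex.I * (Real.sqrt 3 : ℂ), -1, 0;
       0, 1, -Complex.I * (Real.sqrt 3 : ℂ), 1;
       1, 0, -1, -Complex.I * (Real.sqrt 3 : ℂ)]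

/-- The spin representation image 𝐄₃ of E₃. -/
def BE3 : Matrix (Fin 4) (Fin 4) ℂ :=
  (1/2 : ℂ) •
    !![2 * Complex.I, 0, Complex.I, 0;
       0, -2 * Complex.I, 0, Complex.I;
       Complex.I, 0, 2 * Complex.I, 0;
       0, Complex.I, 0, -2 * Complex.I]

theorem Matrix.det_fin_four {R : Type*} [CommRing R] (A : Matrix (Fin 4) (Fin 4) R) :
    A.det =
      A 0 0 * (A 1 1 * A 2 2 * A 3 3 - A 1 1 * A 2 3 * A 3 2 - A 1 2 * A 2 1 * A 3 3
        + A 1 2 * A 2 3 * A 3 1 + A 1 3 * A 2 1 * A 3 2 - A 1 3 * A 2 2 * A 3 1)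
      - A 0 1 * (A 1 0 * A 2 2 * A 3 3 - A 1 0 * A 2 3 * A 3 2 - A 1 2 * A 2 0 * A 3 3
        + A 1 2 * A 2 3 * A 3 0 + A 1 3 * A 2 0 * A 3 2 - A 1 3 * A 2 2 * A 3 0)
      + A 0 2 * (A 1 0 * A 2 1 * A 3 3 - A 1 0 * A 2 3 * A 3 1 - A 1 1 * A 2 0 * A 3 3
        + A 1 1 * A 2 3 * A 3 0 + A 1 3 * A 2 0 * A 3 1 - A 1 3 * A 2 1 * A 3 0)
      - A 0 3 * (A 1 0 * A 2 1 * A 3 2 - A 1 0 * A 2 2 * A 3 1 - A 1 1 * A 2 0 * A 3 2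
        + A 1 1 * A 2 2 * A 3 0 + A 1 2 * A 2 0 * A 3 1 - A 1 2 * A 2 1 * A 3 0) := by
  rw [det_succ_row_zero]
  simp only [Nat.succ_eq_add_one, Nat.reduceAdd, Fin.isValue, det_fin_three, submatrix_apply,
    Fin.succ_zero_eq_one, Fin.succAbove, Fin.castSucc_zero, Fin.succ_one_eq_two, Fin.castSucc_one,
    Fin.reduceSucc, Fin.reduceCastSucc, Fin.sum_univ_succ, Fin.coe_ofNat_eq_mod, Nat.zero_mod,
    pow_zero, one_mul, lt_self_iff_false, ↓reduceIte, not_lt_zero, Fin.val_succ, Fin.succ_pos,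
    zero_add, pow_one, neg_mul, Fin.lt_one_iff, Fin.reduceEq, even_two, Even.neg_pow, one_pow,
    Fin.reduceLT, Finset.univ_unique, Fin.default_eq_zero, Fin.val_eq_zero, Finset.sum_singleton]
  ring

lemma ofReal_sqrt_three_sq : ((√3 : ℝ) : ℂ) ^ 2 = 3 := by
  rw [← ofReal_pow, Real.sq_sqrt (by norm_num)]
  norm_num

-- The 𝐄ᵢ span a copy of the spin-3/2 representation, so a unit combination has eigenvalues
-- ±3i/2, ±i/2, whose product is 9/16.
lemma det_smul_BE_add (a b c : ℂ) :
    (a • BE1 + b • BE2 + c • BE3).det = 9 / 16 * (a ^ 2 + b ^ 2 + c ^ 2) ^ 2 := by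
  have hs4 : ((√3 : ℝ) : ℂ) ^ 4 = 9 := by
    rw [show 4 = 2 * 2 by rfl, pow_mul, ofReal_sqrt_three_sq]
    norm_num
  rw [det_fin_four]
  simp only [BE1, BE2, BE3, one_div, smul_of, smul_cons, smul_eq_mul, mul_zero, mul_neg,
    smul_empty, neg_mul, mul_one, of_add_of, add_cons, head_cons, zero_add, tail_cons, add_zero,
    empty_add_empty, ne_eq, OfNat.ofNat_ne_zero, not_false_eq_true, inv_mul_cancel_left₀,
    Fin.isValue, Matrix.add_apply, of_apply, cons_val', cons_val_zero, cons_val_fin_one,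
    cons_val_one, cons_val]
  ring_nf
  simp only [I_sq, I_pow_four, ofReal_sqrt_three_sq, hs4]
  ring

lemma ofReal_sq_add_sq_add_sq_ne_zero {a b c : ℝ} (h : (a, b, c) ≠ (0, 0, 0)) :
    (a : ℂ) ^ 2 + (b : ℂ) ^ 2 + (c : ℂ) ^ 2 ≠ 0 := by
  norm_cast
  contrapose! h
  simp only [Prod.mk.injEq]
  refine ⟨?_, ?_, ?_⟩ <;> nlinarith [sq_nonneg a, sq_nonneg b, sq_nonneg c]

/-- det(a𝐄₁ + b𝐄₂ + c𝐄₃) = (9/16)(a² + b² + c²)², so for (a,b,c) ≠ 0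
the matrix is invertible and the only Ψ ∈ ℂ⁴ it kills is Ψ = 0. -/
theorem stmt16 : ∀ a b c : ℝ,
    ((a : ℂ) • BE1 + (b : ℂ) • BE2 + (c : ℂ) • BE3).det =
      (9/16 : ℂ) * ((a : ℂ)^2 + (b : ℂ)^2 + (c : ℂ)^2)^2 ∧
    ((a, b, c) ≠ ((0 : ℝ), (0 : ℝ), (0 : ℝ)) →
      ∀ Ψ : Fin 4 → ℂ,
        ((a : ℂ) • BE1 + (b : ℂ) • BE2 + (c : ℂ) • BE3).mulVec Ψ = 0 → Ψ = 0) := by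
  intro a b c
  have hdet := det_smul_BE_add a b c
  refine ⟨hdet, fun h Ψ hΨ => eq_zero_of_mulVec_eq_zero ?_ hΨ⟩
  rw [hdet]
  exact mul_ne_zero (by norm_num) (pow_ne_zero 2 (ofReal_sq_add_sq_add_sq_ne_zero h))
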